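/- (Claim 3.6.) Fix a realization (A, R_A) in the support of the process and an index i ∈ {1, …, m}. Conditioned on (A, R_A), the expected number of pairs (x, r) ∈ P_i(F(A, R_A)) that do not remain feasible after the random choice of B is at most m + 1. Moreover, the same bound m + 1 holds when one additionally conditions on the event that i ∈ P_B and b_i = β, for any fixed β ∈ U_i \ {a_i}. -/

import Mathlib

noncomputable section

namespace Retrieval

/-! ### Entropy on a finite sample space with the uniform distribution -/

/-- The probability of an event `s` under the uniform distribution on a finite type `Ω`. -/
def unifPr (Ω : Type*) [Fintype Ω] (s : Set Ω) : ℝ :=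
  (Nat.card s : ℝ) / (Fintype.card Ω : ℝ)

/-- The Shannon entropy (in bits) of a random variable `X` defined on a finite sample
space `Ω` carrying the uniform distribution. -/
def entropy {Ω : Type*} {α : Type*} [Fintype Ω] (X : Ω → α) : ℝ :=
  (∑ ω : Ω, -Real.logb 2 (unifPr Ω {ω' | X ω' = X ω})) / (Fintype.card Ω : ℝ)

/-- The conditional Shannon entropy `H(X | Y) = H(X, Y) − H(Y)` (in bits). -/
def condEntropy {Ω : Type*} {α β : Type*} [Fintype Ω] (X : Ω → α) (Y : Ω → β) : ℝ :=
  entropy (fun ω => (X ω, Y ω)) - entropy Y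

/-- The first bit of a `v`-bit string. -/
def firstBit {v : ℕ} (r : Fin v → Bool) : Bool :=
  if h : 0 < v then r ⟨0, h⟩ else false

/-! ### The incremental random process

Parameters `n v u`.  The universe `[u]` is split into `m = n − n/v` consecutive parts,
each of size `u/m`.  An element of the `i`-th part is identified by its position
`a ∈ Fin (u/m)` inside the part; as a natural number it is the key `i·(u/m) + a`. -/

variable (n v u : ℕ)

/-- `m = n − n/v`, the number of parts of the universe. -/
def M : ℕ := n - n / v

/-- `u/m`, the size of each part of the universe. -/
def W : ℕ := u / M n v

/-- The key (element of `[u]`, 0-indexed) at position `a` of part `i`. -/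
def key (i : Fin (M n v)) (a : Fin (W n v u)) : ℕ := (i : ℕ) * W n v u + (a : ℕ)

/-- The model hypotheses on the parameters: `2 ≤ v ≤ log₂ n`, `v ∣ n`,
`m = n − n/v` divides `u`, and `u ≥ n³`. -/
def Hyp : Prop :=
  2 ≤ v ∧ (v : ℝ) ≤ Real.logb 2 n ∧ v ∣ n ∧ M n v ∣ u ∧ n ^ 3 ≤ u

/-- Raw data of a realization of the incremental random process:
`((A, R_A), (P_B, B, R_B))`.  `A i` is the (position of the) element of `A` in part `i`
and `R_A i` its `v`-bit value; `P_B` is the set of parts from which `B` samples, `B i` the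
element of `B` in part `i` (for `i ∈ P_B`; it is a canonical junk value `0` otherwise) and
`R_B i` its value (a canonical junk value otherwise). -/
abbrev IncData : Type :=
  ((Fin (M n v) → Fin (W n v u)) × (Fin (M n v) → Fin v → Bool)) ×
    (Finset (Fin (M n v)) × (Fin (M n v) → Fin (W n v u)) × (Fin (M n v) → Fin v → Bool))

/-- Validity of a realization of `(A, R_A)`: every value has first bit `0`
(the set `A` itself is unconstrained). -/
def ValidAR (_A : Fin (M n v) → Fin (W n v u)) (RA : Fin (M n v) → Fin v → Bool) : Prop :=
  ∀ j, firstBit (RA j) = false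

/-- Validity of a realization `(P_B, B)` given `A`: `|P_B| = n/v`, for `i ∈ P_B` the
element `B i` avoids `A i`, and outside `P_B` the function `B` takes a canonical junk
value (so that `(P_B, B)` carries exactly the information of the indexed family
`(b_i)_{i ∈ P_B}`). -/
def ValidB (A : Fin (M n v) → Fin (W n v u)) (P : Finset (Fin (M n v)))
    (B : Fin (M n v) → Fin (W n v u)) : Prop :=
  P.card = n / v ∧ (∀ j ∈ P, B j ≠ A j) ∧ ∀ j ∉ P, (B j : ℕ) = 0

/-- Validity of a realization of `R_B` given `P_B`: for `i ∈ P_B` the value has first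
bit `1`; outside `P_B` it is a canonical junk value. -/
def ValidRB (P : Finset (Fin (M n v))) (RB : Fin (M n v) → Fin v → Bool) : Prop :=
  (∀ j ∈ P, firstBit (RB j) = true) ∧ ∀ j ∉ P, RB j = fun _ => false

/-- Validity of a full realization of the incremental process. -/
def IncValid (d : IncData n v u) : Prop :=
  ValidAR n v u d.1.1 d.1.2 ∧ ValidB n v u d.1.1 d.2.1 d.2.2.1 ∧ ValidRB n v d.2.1 d.2.2.2

/-- The sample space of the incremental random process: since every random choice in the
process is uniform (subject to the stated constraints, whose number of options does not
depend on the previous choices), the joint distribution of `(A, R_A, P_B, B, R_B)` is the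
uniform distribution on the set of valid realizations. -/
abbrev IncOmega : Type := {d : IncData n v u // IncValid n v u d}

noncomputable instance : Fintype (IncOmega n v u) := Fintype.ofFinite _

/-- The type of the (deterministic) map `F`, building a bit string from a realization of
`(A, R_A)`. -/
abbrev FBuilder : Type :=
  (Fin (M n v) → Fin (W n v u)) → (Fin (M n v) → Fin v → Bool) → List Bool

/-- The type of the (deterministic) map `G`, building a bit string from a bit string
together with a realization of `(B, R_B)` (given as `(P_B, B, R_B)`). -/
abbrev GBuilder : Type :=
  List Bool → Finset (Fin (M n v)) → (Fin (M n v) → Fin (W n v u)) →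
    (Fin (M n v) → Fin v → Bool) → List Bool

/-- The type of the (deterministic) query map: a bit string and a key give a `v`-bit
value. -/
abbrev QueryFn (v : ℕ) : Type := List Bool → ℕ → Fin v → Bool

/-- The random bit string `F = F(A, R_A)`. -/
def Frv (F : FBuilder n v u) (ω : IncOmega n v u) : List Bool := F ω.1.1.1 ω.1.1.2

/-- The random bit string `G = G(F(A, R_A), B, R_B)`. -/
def Grv (F : FBuilder n v u) (G : GBuilder n v u) (ω : IncOmega n v u) : List Bool :=
  G (Frv n v u F ω) ω.1.2.1 ω.1.2.2.1 ω.1.2.2.2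

/-- The random variable `B` (together with the set of parts `P_B` it samples from). -/
def Brv (ω : IncOmega n v u) : Finset (Fin (M n v)) × (Fin (M n v) → Fin (W n v u)) :=
  (ω.1.2.1, ω.1.2.2.1)

/-- The random variable `(B, R_B)`. -/
def BRrv (ω : IncOmega n v u) :
    Finset (Fin (M n v)) × (Fin (M n v) → Fin (W n v u)) × (Fin (M n v) → Fin v → Bool) :=
  ω.1.2

/-- Correctness of an incremental retrieval scheme `(F, G, Query)`: on every realization
in the support of the process, querying `F(A,R_A)` with a key of `A` returns its value,
and querying `G(F(A,R_A),B,R_B)` with a key of `A` or of `B` returns its value. -/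
def Correct (F : FBuilder n v u) (G : GBuilder n v u) (Q : QueryFn v) : Prop :=
  ∀ ω : IncOmega n v u,
    (∀ i, Q (Frv n v u F ω) (key n v u i (ω.1.1.1 i)) = ω.1.1.2 i) ∧
    (∀ i, Q (Grv n v u F G ω) (key n v u i (ω.1.1.1 i)) = ω.1.1.2 i) ∧
    (∀ i ∈ ω.1.2.1, Q (Grv n v u F G ω) (key n v u i (ω.1.2.2.1 i)) = ω.1.2.2.2 i)

/-- The plausible set `P_i(f)`: all pairs `(x, r)` of an element `x` of part `i` and a
`v`-bit value `r` with first bit `0` such that some realization `(A', R'_{A'})` in the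
support of `(A, R_A)` has `F(A', R'_{A'}) = f`, `x` the element of `A'` in part `i`, and
`r` its value. -/
def Plausible (F : FBuilder n v u) (f : List Bool) (i : Fin (M n v)) :
    Set (Fin (W n v u) × (Fin v → Bool)) :=
  {p | ∃ A' RA', ValidAR n v u A' RA' ∧ F A' RA' = f ∧ A' i = p.1 ∧ RA' i = p.2}

/-- A pair `(x, r) ∈ P_i(f)` *remains feasible after `B`* (given as `(P_B, B)`) if the
witness `(A', R'_{A'})` can additionally be chosen with `A' ∩ B = ∅`. -/
def Feasible (F : FBuilder n v u) (f : List Bool) (i : Fin (M n v))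
    (P : Finset (Fin (M n v))) (B : Fin (M n v) → Fin (W n v u))
    (p : Fin (W n v u) × (Fin v → Bool)) : Prop :=
  ∃ A' RA', ValidAR n v u A' RA' ∧ F A' RA' = f ∧ A' i = p.1 ∧ RA' i = p.2 ∧
    ∀ j ∈ P, B j ≠ A' j

end Retrieval

namespace Retrieval

/-!
Fix, for every plausible pair `p = (x, r) ∈ P_i(F(A, R_A))`, one witness `A'_p`. The pair can
only stop being feasible if `B` meets `A'_p`, i.e. `b_j = a'_{p,j}` for some `j ∈ P_B`. Given
`j ∈ P_B`, the element `b_j` is uniform over the `u/m - 1` elements of `U_j` other than `a_j`,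
so this happens with probability at most `1/(u/m - 1)`. Correctness of `F` makes the value of a
plausible pair a function of its key, so there are at most `u/m` plausible pairs, and summing
over them and over the `n/v` parts of `P_B` gives at most `(u/m)(n/v)/(u/m - 1) ≤ m + 1`.
Conditioning on `i ∈ P_B` and `b_i = β` leaves the other `n/v - 1` parts uniform, while part `i`
can only be met by the single plausible pair with key `β`.
-/

open Finset

section Resampling

variable {ι α : Type*} [DecidableEq ι]

def resample (j : ι) (y : α) (q : Finset ι × (ι → α)) : Finset ι × (ι → α) :=
  (q.1, Function.update q.2 j y)

/-- Makes the values `≠ a j` of a coordinate `j ∈ q.1 ∩ J` equally frequent on `S`. -/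
def ResampleClosed (a : ι → α) (J : Finset ι) (S : Finset (Finset ι × (ι → α))) : Prop :=
  ∀ q ∈ S, ∀ j ∈ q.1 ∩ J, q.2 j ≠ a j ∧ ∀ y, y ≠ a j → resample j y q ∈ S

lemma sum_card_filter_mem_eq_sum_card_inter (J : Finset ι) (S : Finset (Finset ι × (ι → α))) :
    ∑ j ∈ J, #{q ∈ S | j ∈ q.1} = ∑ q ∈ S, #(q.1 ∩ J) := by
  simp_rw [inter_comm _ J, ← filter_mem_eq_inter, card_eq_sum_ones, sum_filter]
  exact sum_comm

variable [DecidableEq α] {a : ι → α} {J : Finset ι} {S : Finset (Finset ι × (ι → α))} {j : ι}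

lemma sum_sum_card_hits_eq {π : Type*} (J : Finset ι) (S : Finset (Finset ι × (ι → α)))
    (T : Finset π) (w : π → ι → α) :
    ∑ q ∈ S, ∑ j ∈ q.1 ∩ J, #{p ∈ T | q.2 j = w p j}
      = ∑ p ∈ T, ∑ j ∈ J, #{q ∈ S | j ∈ q.1 ∧ q.2 j = w p j} := by
  rw [sum_comm' (t' := J) (s' := fun j => {q ∈ S | j ∈ q.1})
    (by simp only [mem_inter, mem_filter]; tauto), sum_comm]
  refine sum_congr rfl fun j _ => ?_
  simp_rw [← filter_filter]
  exact sum_card_bipartiteAbove_eq_sum_card_bipartiteBelow _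

lemma ResampleClosed.card_fiber_eq (hS : ResampleClosed a J S) (hj : j ∈ J) {c c' : α}
    (hc : c ≠ a j) (hc' : c' ≠ a j) :
    #{q ∈ S | j ∈ q.1 ∧ q.2 j = c'} = #{q ∈ S | j ∈ q.1 ∧ q.2 j = c} := by
  refine card_nbij' (resample j c) (resample j c') ?_ ?_ ?_ ?_ <;>
    intro q hq <;> simp only [mem_coe, mem_filter] at hq ⊢
  · exact ⟨(hS q hq.1 j (mem_inter.2 ⟨hq.2.1, hj⟩)).2 c hc, hq.2.1, by simp [resample]⟩
  · exact ⟨(hS q hq.1 j (mem_inter.2 ⟨hq.2.1, hj⟩)).2 c' hc', hq.2.1, by simp [resample]⟩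
  · simp [resample, ← hq.2.2]
  · simp [resample, ← hq.2.2]

variable [Fintype α]

lemma ResampleClosed.mul_card_fiber_le (hS : ResampleClosed a J S) (hj : j ∈ J) (c : α) :
    (Fintype.card α - 1) * #{q ∈ S | j ∈ q.1 ∧ q.2 j = c} ≤ #{q ∈ S | j ∈ q.1} := by
  by_cases hc : c = a j
  · have hempty : {q ∈ S | j ∈ q.1 ∧ q.2 j = c} = ∅ :=
      filter_eq_empty_iff.2 fun q hq hqc =>
        (hS q hq j (mem_inter.2 ⟨hqc.1, hj⟩)).1 (hqc.2.trans hc)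
    simp [hempty]
  calc (Fintype.card α - 1) * #{q ∈ S | j ∈ q.1 ∧ q.2 j = c}
      = ∑ c' ∈ univ.erase (a j), #{q ∈ S | j ∈ q.1 ∧ q.2 j = c'} := by
        rw [sum_congr rfl fun c' hc' => hS.card_fiber_eq hj hc (ne_of_mem_erase hc'),
          sum_const, card_erase_of_mem (mem_univ _), card_univ, smul_eq_mul]
    _ ≤ ∑ c', #{q ∈ S | j ∈ q.1 ∧ q.2 j = c'} := sum_le_sum_of_subset (erase_subset _ _)
    _ = #{q ∈ S | j ∈ q.1} := by
        rw [card_eq_sum_card_fiberwise (f := fun q => q.2 j) (t := univ) fun _ _ => mem_univ _]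
        simp only [filter_filter]

variable {K : ℕ} {π : Type*} (T : Finset π) (w : π → ι → α)

lemma ResampleClosed.mul_sum_card_hits_le (hS : ResampleClosed a J S)
    (hK : ∀ q ∈ S, #(q.1 ∩ J) ≤ K) :
    (Fintype.card α - 1) * ∑ q ∈ S, ∑ j ∈ q.1 ∩ J, #{p ∈ T | q.2 j = w p j}
      ≤ #T * (K * #S) :=
  calc (Fintype.card α - 1) * ∑ q ∈ S, ∑ j ∈ q.1 ∩ J, #{p ∈ T | q.2 j = w p j}
      = ∑ p ∈ T, ∑ j ∈ J, (Fintype.card α - 1) * #{q ∈ S | j ∈ q.1 ∧ q.2 j = w p j} := by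
        simp_rw [sum_sum_card_hits_eq, mul_sum]
    _ ≤ ∑ p ∈ T, ∑ j ∈ J, #{q ∈ S | j ∈ q.1} :=
        sum_le_sum fun p _ => sum_le_sum fun j hj => hS.mul_card_fiber_le hj (w p j)
    _ = #T * ∑ q ∈ S, #(q.1 ∩ J) := by
        rw [sum_const, smul_eq_mul, sum_card_filter_mem_eq_sum_card_inter]
    _ ≤ #T * (K * #S) := by
        gcongr
        simpa [mul_comm] using sum_le_sum hK

lemma ResampleClosed.sum_card_hits_le (hS : ResampleClosed a J S)
    (hK : ∀ q ∈ S, #(q.1 ∩ J) ≤ K) {L : ℕ} (hKL : K + 1 ≤ L) (hKα : K + 2 ≤ Fintype.card α)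
    (hT : #T ≤ Fintype.card α) :
    ∑ q ∈ S, ∑ j ∈ q.1 ∩ J, #{p ∈ T | q.2 j = w p j} ≤ L * #S := by
  obtain ⟨V, hV⟩ : ∃ V, Fintype.card α = V + 1 := ⟨_, (Nat.sub_add_cancel (by omega)).symm⟩
  refine Nat.le_of_mul_le_mul_left ?_ (show 0 < Fintype.card α - 1 by omega)
  calc (Fintype.card α - 1) * ∑ q ∈ S, ∑ j ∈ q.1 ∩ J, #{p ∈ T | q.2 j = w p j}
      ≤ #T * (K * #S) := hS.mul_sum_card_hits_le T w hK
    _ ≤ (V + 1) * K * #S := by rw [mul_assoc, ← hV]; gcongr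
    _ ≤ (Fintype.card α - 1) * (L * #S) := by
        rw [hV, Nat.add_sub_cancel, ← mul_assoc]
        have hKV : K + 1 ≤ V := by omega
        exact Nat.mul_le_mul_right _ (by nlinarith)

end Resampling

lemma sum_indicator_div_card_le {β : Type*} [Fintype β] (p : β → Prop) (g : β → ℕ)
    (S : Finset β) (hS : ∀ q, q ∈ S ↔ p q) {c : ℕ} (h : ∑ q ∈ S, g q ≤ c * #S) :
    (∑ q, Set.indicator {q | p q} (fun q => (g q : ℝ)) q) / Nat.card {q // p q} ≤ c := by
  have hset : {q | p q} = (S : Set β) := by ext q; simp [hS]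
  have hcard : Nat.card {q // p q} = #S := by
    rw [← Nat.card_eq_finsetCard]
    exact Nat.card_congr (Equiv.subtypeEquivRight fun q => (hS q).symm)
  rw [hset, sum_indicator_subset _ (subset_univ S), hcard]
  exact div_le_of_le_mul₀ (Nat.cast_nonneg _) (Nat.cast_nonneg _) (by exact_mod_cast h)

section Parameters

variable {n v u : ℕ}

lemma div_le_M (hv : 2 ≤ v) : n / v ≤ M n v := by
  have : n / v ≤ n / 2 := Nat.div_le_div_left hv two_pos
  have := Nat.div_mul_le_self n 2
  unfold M
  omega

lemma Hyp.four_le (h : Hyp n v u) : 4 ≤ n := by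
  obtain ⟨hv, hlog, -⟩ := h
  have two_le_logb : (2 : ℝ) ≤ Real.logb 2 n := le_trans (by exact_mod_cast hv) hlog
  rcases Nat.eq_zero_or_pos n with rfl | hn
  · norm_num at two_le_logb
  have := (Real.le_logb_iff_rpow_le one_lt_two (by exact_mod_cast hn)).1 two_le_logb
  norm_num at this
  exact_mod_cast this

lemma Hyp.M_pos (h : Hyp n v u) : 0 < M n v := by
  have := h.four_le
  have := div_le_M (n := n) h.1
  unfold M at *
  generalize n / v = k at *
  omega

lemma Hyp.div_add_two_le_W (h : Hyp n v u) : n / v + 2 ≤ W n v u := by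
  have := h.four_le
  have : n ^ 3 / n ≤ u / M n v :=
    (Nat.div_le_div_left (Nat.sub_le n _) h.M_pos).trans (Nat.div_le_div_right h.2.2.2.2)
  rw [pow_succ, Nat.mul_div_cancel _ (by omega)] at this
  have : n / v ≤ n := Nat.div_le_self n v
  unfold W
  nlinarith

lemma Hyp.exists_incValid (h : Hyp n v u) {A : Fin (M n v) → Fin (W n v u)}
    {RA : Fin (M n v) → Fin v → Bool} (hA : ValidAR n v u A RA) :
    ∃ ω : IncOmega n v u, ω.1.1 = (A, RA) := by
  classical
  have hW := h.div_add_two_le_W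
  obtain ⟨P, -, hP⟩ := exists_subset_card_eq
    (s := (univ : Finset (Fin (M n v)))) (n := n / v) (by simpa using div_le_M h.1)
  choose y hy using fun j => Fintype.exists_ne_of_one_lt_card (α := Fin (W n v u))
    (by rw [Fintype.card_fin]; omega) (A j)
  let zero : Fin (W n v u) := ⟨0, by omega⟩
  let B j := if j ∈ P then y j else zero
  let RB : Fin (M n v) → Fin v → Bool := fun j _ => decide (j ∈ P)
  refine ⟨⟨((A, RA), (P, B, RB)), hA, ⟨hP, fun j hj => ?_, fun j hj => ?_⟩, fun j hj => ?_,
    fun j hj => ?_⟩, rfl⟩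
  · simpa [B, hj] using hy j
  · simp [B, hj, zero]
  · simp [RB, hj, firstBit, show 0 < v by have := h.1; omega]
  · simp [RB, hj]

end Parameters

section Plausible

variable {n v u : ℕ} {F : FBuilder n v u} {G : GBuilder n v u} {Q : QueryFn v}
  {f : List Bool} {i : Fin (M n v)}

lemma Correct.snd_eq_query (hC : Correct n v u F G Q) (h : Hyp n v u)
    {p : Fin (W n v u) × (Fin v → Bool)} (hp : p ∈ Plausible n v u F f i) :
    p.2 = Q f (key n v u i p.1) := by
  obtain ⟨A', RA', hA', rfl, hx, hr⟩ := hp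
  obtain ⟨ω, hω⟩ := h.exists_incValid hA'
  have := (hC ω).1 i
  simp only [Frv, hω] at this
  rw [← hx, ← hr, this]

lemma Correct.injOn_fst_plausible (hC : Correct n v u F G Q) (h : Hyp n v u) :
    Set.InjOn Prod.fst (Plausible n v u F f i) := fun p hp p' hp' hfst =>
  Prod.ext hfst (by rw [hC.snd_eq_query h hp, hC.snd_eq_query h hp', hfst])

def plausibleFinset (F : FBuilder n v u) (f : List Bool) (i : Fin (M n v)) :
    Finset (Fin (W n v u) × (Fin v → Bool)) :=
  (Set.toFinite (Plausible n v u F f i)).toFinset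

lemma Correct.card_plausibleFinset_le (hC : Correct n v u F G Q) (h : Hyp n v u) :
    #(plausibleFinset F f i) ≤ W n v u := by
  simpa using card_le_card_of_injOn Prod.fst (s := plausibleFinset F f i) (t := univ)
    (fun _ _ => mem_univ _)
    (by simpa only [plausibleFinset, Set.Finite.coe_toFinset] using hC.injOn_fst_plausible h)

def infeasibleCount (F : FBuilder n v u) (f : List Bool) (i : Fin (M n v))
    (P : Finset (Fin (M n v))) (B : Fin (M n v) → Fin (W n v u)) : ℕ :=
  Nat.card {p | p ∈ Plausible n v u F f i ∧ ¬ Feasible n v u F f i P B p}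

def IsWitnessChoice (F : FBuilder n v u) (f : List Bool) (i : Fin (M n v))
    (w : Fin (W n v u) × (Fin v → Bool) → Fin (M n v) → Fin (W n v u)) : Prop :=
  ∀ p ∈ Plausible n v u F f i,
    ∃ RA', ValidAR n v u (w p) RA' ∧ F (w p) RA' = f ∧ w p i = p.1 ∧ RA' i = p.2

lemma exists_isWitnessChoice [Nonempty (Fin (M n v) → Fin (W n v u))] (F : FBuilder n v u)
    (f : List Bool) (i : Fin (M n v)) : ∃ w, IsWitnessChoice F f i w := by
  choose! w RA' hw using fun p (hp : p ∈ Plausible n v u F f i) => hp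
  exact ⟨w, fun p hp => ⟨RA' p, hw p hp⟩⟩

/-- Union bound: a pair stays feasible unless `B` meets its chosen witness. -/
lemma IsWitnessChoice.infeasibleCount_le {w} (hw : IsWitnessChoice F f i w)
    (P : Finset (Fin (M n v))) (B : Fin (M n v) → Fin (W n v u)) :
    infeasibleCount F f i P B ≤ ∑ j ∈ P, #{p ∈ plausibleFinset F f i | B j = w p j} := by
  classical
  have hsub : {p | p ∈ Plausible n v u F f i ∧ ¬ Feasible n v u F f i P B p}
      ⊆ ↑(P.biUnion fun j => {p ∈ plausibleFinset F f i | B j = w p j}) := by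
    rintro p ⟨hp, hinfeasible⟩
    obtain ⟨RA', hw⟩ := hw p hp
    obtain ⟨j, hj, hhit⟩ : ∃ j ∈ P, B j = w p j := by
      by_contra! hmiss
      exact hinfeasible ⟨w p, RA', hw.1, hw.2.1, hw.2.2.1, hw.2.2.2, hmiss⟩
    simpa [plausibleFinset] using ⟨hp, j, hj, hhit⟩
  calc infeasibleCount F f i P B
      ≤ #(P.biUnion fun j => {p ∈ plausibleFinset F f i | B j = w p j}) := by
        rw [infeasibleCount, Nat.card_coe_set_eq, ← Set.ncard_coe_finset]
        exact Set.ncard_le_ncard hsub (finite_toSet _)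
    _ ≤ _ := card_biUnion_le

lemma IsWitnessChoice.card_filter_apply_eq_le_one {w} (hw : IsWitnessChoice F f i w)
    (hC : Correct n v u F G Q) (h : Hyp n v u) (β : Fin (W n v u)) :
    #{p ∈ plausibleFinset F f i | β = w p i} ≤ 1 := by
  refine card_le_one.2 fun p hp p' hp' => ?_
  simp only [mem_filter, plausibleFinset, Set.Finite.mem_toFinset] at hp hp'
  obtain ⟨-, -, -, hp1, -⟩ := hw p hp.1
  obtain ⟨-, -, -, hp'1, -⟩ := hw p' hp'.1
  exact hC.injOn_fst_plausible h hp.1 hp'.1 (by rw [← hp1, ← hp'1, ← hp.2, ← hp'.2])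

end Plausible

section Expectation

variable {n v u : ℕ} {A : Fin (M n v) → Fin (W n v u)}
  {S : Finset (Finset (Fin (M n v)) × (Fin (M n v) → Fin (W n v u)))}

lemma ValidB.update {P : Finset (Fin (M n v))} {B : Fin (M n v) → Fin (W n v u)}
    (hB : ValidB n v u A P B) {j : Fin (M n v)} (hj : j ∈ P) {y : Fin (W n v u)}
    (hy : y ≠ A j) : ValidB n v u A P (Function.update B j y) := by
  obtain ⟨hcard, havoid, hjunk⟩ := hB
  refine ⟨hcard, fun j' hj' => ?_, fun j' hj' => ?_⟩
  · rcases eq_or_ne j' j with rfl | hne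
    · simpa using hy
    · simpa [hne] using havoid j' hj'
  · simpa [show j' ≠ j by rintro rfl; exact hj' hj] using hjunk j' hj'

lemma resampleClosed_validB (hS : ∀ q, q ∈ S ↔ ValidB n v u A q.1 q.2) :
    ResampleClosed A univ S := fun q hq j hj => by
  rw [hS] at hq
  rw [inter_univ] at hj
  exact ⟨hq.2.1 j hj, fun y hy => (hS _).2 (hq.update hj hy)⟩

lemma resampleClosed_validB_of_apply_eq {i : Fin (M n v)} {β : Fin (W n v u)}
    (hS : ∀ q, q ∈ S ↔ ValidB n v u A q.1 q.2 ∧ i ∈ q.1 ∧ q.2 i = β) :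
    ResampleClosed A (univ.erase i) S := fun q hq j hj => by
  rw [hS] at hq
  obtain ⟨hj, hji⟩ : j ∈ q.1 ∧ j ≠ i := by simpa [and_comm] using hj
  refine ⟨hq.1.2.1 j hj, fun y hy => (hS _).2 ⟨hq.1.update hj hy, hq.2.1, ?_⟩⟩
  simpa [resample, hji.symm] using hq.2.2

variable {F : FBuilder n v u} {G : GBuilder n v u} {Q : QueryFn v} {f : List Bool}
  {i : Fin (M n v)}

theorem Correct.sum_infeasibleCount_le (hC : Correct n v u F G Q) (h : Hyp n v u)
    (hS : ∀ q, q ∈ S ↔ ValidB n v u A q.1 q.2) :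
    ∑ q ∈ S, infeasibleCount F f i q.1 q.2 ≤ (M n v + 1) * #S := by
  have : Nonempty (Fin (M n v) → Fin (W n v u)) := ⟨A⟩
  obtain ⟨w, hw⟩ := exists_isWitnessChoice F f i
  calc ∑ q ∈ S, infeasibleCount F f i q.1 q.2
      ≤ ∑ q ∈ S, ∑ j ∈ q.1 ∩ univ, #{p ∈ plausibleFinset F f i | q.2 j = w p j} :=
        sum_le_sum fun q _ => by simpa only [inter_univ] using hw.infeasibleCount_le q.1 q.2
    _ ≤ (M n v + 1) * #S :=
        (resampleClosed_validB hS).sum_card_hits_le _ _ (K := n / v)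
          (fun q hq => by rw [inter_univ, ((hS q).1 hq).1])
          (Nat.succ_le_succ (div_le_M h.1))
          (by simpa using h.div_add_two_le_W)
          (by simpa using hC.card_plausibleFinset_le h)

theorem Correct.sum_infeasibleCount_le_of_apply_eq (hC : Correct n v u F G Q) (h : Hyp n v u)
    {β : Fin (W n v u)} (hS : ∀ q, q ∈ S ↔ ValidB n v u A q.1 q.2 ∧ i ∈ q.1 ∧ q.2 i = β) :
    ∑ q ∈ S, infeasibleCount F f i q.1 q.2 ≤ (M n v + 1) * #S := by
  have : Nonempty (Fin (M n v) → Fin (W n v u)) := ⟨A⟩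
  obtain ⟨w, hw⟩ := exists_isWitnessChoice F f i
  -- part `i` is no longer random: only the plausible pair with key `β` can be met there
  have split_off_i (q) (hq : q ∈ S) : infeasibleCount F f i q.1 q.2 ≤
      ∑ j ∈ q.1 ∩ univ.erase i, #{p ∈ plausibleFinset F f i | q.2 j = w p j} + 1 := by
    obtain ⟨-, hi, hβ⟩ := (hS q).1 hq
    rw [inter_erase, inter_univ]
    refine (hw.infeasibleCount_le q.1 q.2).trans ?_
    rw [← sum_erase_add _ _ hi, hβ]
    exact Nat.add_le_add_left (hw.card_filter_apply_eq_le_one hC h β) _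
  calc ∑ q ∈ S, infeasibleCount F f i q.1 q.2
      ≤ ∑ q ∈ S, (∑ j ∈ q.1 ∩ univ.erase i,
          #{p ∈ plausibleFinset F f i | q.2 j = w p j} + 1) := sum_le_sum split_off_i
    _ ≤ M n v * #S + #S := by
        rw [sum_add_distrib, sum_const, smul_eq_mul, mul_one]
        gcongr
        refine (resampleClosed_validB_of_apply_eq hS).sum_card_hits_le _ _ (K := n / v - 1)
          (fun q hq => ?_) ?_ ?_ (by simpa using hC.card_plausibleFinset_le h)
        · obtain ⟨hB, hi, -⟩ := (hS q).1 hq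
          rw [inter_erase, inter_univ, card_erase_of_mem hi, hB.1]
        · exact tsub_add_eq_max.trans_le (max_le (div_le_M h.1) h.M_pos)
        · simpa using (Nat.add_le_add_right (Nat.sub_le _ 1) 2).trans h.div_add_two_le_W
    _ = (M n v + 1) * #S := by ring

end Expectation

/-- **Claim 3.6.** Fix a realization `(A, R_A)` in the support of the process and an
index `i ∈ {1, …, m}`.  Conditioned on `(A, R_A)`, the expected number of pairs
`(x, r) ∈ P_i(F(A, R_A))` that do *not* remain feasible after the random choice of `B`
is at most `m + 1`.  Moreover, the same bound `m + 1` holds when one additionally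
conditions on the event that `i ∈ P_B` and `b_i = β`, for any fixed `β ∈ U_i \ {a_i}`.

(Conditioned on `(A, R_A)`, the pair `(P_B, B)` is uniform over its valid realizations,
so each conditional expectation is the corresponding average of counts.) -/
theorem expected_infeasible_pairs :
    ∀ n v u : ℕ, Hyp n v u →
    ∀ (F : FBuilder n v u) (G : GBuilder n v u) (Q : QueryFn v),
      Correct n v u F G Q →
    ∀ (A : Fin (M n v) → Fin (W n v u)) (RA : Fin (M n v) → Fin v → Bool),
      ValidAR n v u A RA →
    ∀ i : Fin (M n v),
      ((∑ q : Finset (Fin (M n v)) × (Fin (M n v) → Fin (W n v u)),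
          Set.indicator {q | ValidB n v u A q.1 q.2}
            (fun q => (Nat.card {p : Fin (W n v u) × (Fin v → Bool) |
                p ∈ Plausible n v u F (F A RA) i ∧
                  ¬ Feasible n v u F (F A RA) i q.1 q.2 p} : ℝ)) q) /
          (Nat.card {q : Finset (Fin (M n v)) × (Fin (M n v) → Fin (W n v u)) //
            ValidB n v u A q.1 q.2} : ℝ) ≤ (M n v : ℝ) + 1) ∧
      ∀ β : Fin (W n v u), β ≠ A i →
        (∑ q : Finset (Fin (M n v)) × (Fin (M n v) → Fin (W n v u)),
            Set.indicator {q | ValidB n v u A q.1 q.2 ∧ i ∈ q.1 ∧ q.2 i = β}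
              (fun q => (Nat.card {p : Fin (W n v u) × (Fin v → Bool) |
                  p ∈ Plausible n v u F (F A RA) i ∧
                    ¬ Feasible n v u F (F A RA) i q.1 q.2 p} : ℝ)) q) /
          (Nat.card {q : Finset (Fin (M n v)) × (Fin (M n v) → Fin (W n v u)) //
            ValidB n v u A q.1 q.2 ∧ i ∈ q.1 ∧ q.2 i = β} : ℝ) ≤ (M n v : ℝ) + 1 := by
  intro n v u h F G Q hC A RA _ i
  classical
  refine ⟨?_, fun β _ => ?_⟩
  · exact le_of_le_of_eq (sum_indicator_div_card_le _ _ {q | ValidB n v u A q.1 q.2}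
      (fun _ => by simp) (hC.sum_infeasibleCount_le (A := A) h fun _ => by simp))
      (Nat.cast_succ _)
  · exact le_of_le_of_eq (sum_indicator_div_card_le _ _
      {q | ValidB n v u A q.1 q.2 ∧ i ∈ q.1 ∧ q.2 i = β} (fun _ => by simp)
      (hC.sum_infeasibleCount_le_of_apply_eq (A := A) (β := β) h fun _ => by simp))
      (Nat.cast_succ _)

end Retrieval
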